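/- Spectral gap above the history state: suppose ‖φ‖ = 1, and let v be any vector in the linear span of {γ₀, …, γ_K} that is orthogonal to the history state Σ_{t=0}^{K} γ_t. Then ⟨v, H_prop v⟩ ≥ (1 − cos(π/(K+1)))·‖v‖², and in particular ⟨v, H_prop v⟩ ≥ ‖v‖²/(2(K+1)²). -/

import Mathlib

open Matrix Complex
open scoped Kronecker Matrix

/-- The product `U_t ⋯ U_2 U_1` (with `U i` for `i : Fin K` standing for `U_{i+1}`). -/
noncomputable def prodU (d K : ℕ) (U : Fin K → Matrix (Fin d) (Fin d) ℂ) :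
    ℕ → Matrix (Fin d) (Fin d) ℂ
  | 0 => 1
  | t + 1 => (if h : t < K then U ⟨t, h⟩ else 1) * prodU d K U t

/-- The state `γ_t := (U_t ⋯ U₁ φ) ⊗ e_t` on `ℂ^d ⊗ ℂ^{K+1}`. -/
noncomputable def gammaVec (d K : ℕ) (U : Fin K → Matrix (Fin d) (Fin d) ℂ)
    (φ : Fin d → ℂ) (t : Fin (K + 1)) : Fin d × Fin (K + 1) → ℂ :=
  fun p => (prodU d K U t.val *ᵥ φ) p.1 * (if p.2 = t then 1 else 0)

/-- The clock matrix `e_a e_b†` on `ℂ^{K+1}`. -/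
noncomputable def clockE (K : ℕ) (a b : Fin (K + 1)) :
    Matrix (Fin (K + 1)) (Fin (K + 1)) ℂ :=
  Matrix.single a b 1

/-- The propagation term
`H_t := I ⊗ (e_t e_t† + e_{t+1} e_{t+1}†) − U_{t+1} ⊗ (e_{t+1} e_t†) − U_{t+1}† ⊗ (e_t e_{t+1}†)`. -/
noncomputable def Hterm (d K : ℕ) (U : Fin K → Matrix (Fin d) (Fin d) ℂ) (t : Fin K) :
    Matrix (Fin d × Fin (K + 1)) (Fin d × Fin (K + 1)) ℂ :=
  (1 : Matrix (Fin d) (Fin d) ℂ) ⊗ₖ (clockE K t.castSucc t.castSucc + clockE K t.succ t.succ)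
    - (U t) ⊗ₖ (clockE K t.succ t.castSucc)
    - (U t)ᴴ ⊗ₖ (clockE K t.castSucc t.succ)

/-- The propagation Hamiltonian `H_prop := Σ_{t=0}^{K−1} H_t`. -/
noncomputable def Hprop (d K : ℕ) (U : Fin K → Matrix (Fin d) (Fin d) ℂ) :
    Matrix (Fin d × Fin (K + 1)) (Fin d × Fin (K + 1)) ℂ :=
  ∑ t : Fin K, Hterm d K U t

/-!
The states `γ_t` are orthonormal (each `U_t ⋯ U₁` is unitary) and `H_t` acts on them as the
edge Laplacian of the path: `γ_t ↦ γ_t − γ_{t+1}`, `γ_{t+1} ↦ γ_{t+1} − γ_t`, other `γ_s ↦ 0`.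
Hence for `v = Σ c_t γ_t` we get `‖v‖² = Σ |c_t|²`, `⟨v, H_prop v⟩ = Σ |c_{t+1} − c_t|²`, and
orthogonality to the history state means `Σ c_t = 0`. The claim is thus a Poincaré inequality on
a path with `N = K + 1` vertices. By Cauchy–Schwarz `|c_s − c_t|² ≤ |s − t| Σ |c_{i+1} − c_i|²`;
summing over all pairs and using `Σ_{s,t} |c_s − c_t|² = 2N Σ |c_t|²` for mean-zero `c` and
`Σ_{s,t} |s − t| = (N³ − N)/3` gives `6 Σ |c_t|² ≤ N² Σ |c_{t+1} − c_t|²`, which implies both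
bounds because `1 − cos x ≤ x²/2` and `π² < 12`.
-/

open Finset

section PathPoincare

theorem norm_sub_sq_le_mul_sum_Ico {E : Type*} [SeminormedAddCommGroup E] (f : ℕ → E) {s t : ℕ}
    (hst : s ≤ t) :
    ‖f t - f s‖ ^ 2 ≤ (t - s : ℕ) * ∑ i ∈ Ico s t, ‖f (i + 1) - f i‖ ^ 2 := by
  rw [← sum_Ico_sub f hst, ← Nat.card_Ico]
  calc ‖∑ i ∈ Ico s t, (f (i + 1) - f i)‖ ^ 2
      ≤ (∑ i ∈ Ico s t, ‖f (i + 1) - f i‖) ^ 2 := by gcongr; exact norm_sum_le _ _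
    _ ≤ _ := sq_sum_le_card_mul_sum_sq

theorem norm_sub_sq_le_abs_sub_mul_sum_range {E : Type*} [SeminormedAddCommGroup E] (f : ℕ → E)
    {n s t : ℕ} (hs : s ≤ n) (ht : t ≤ n) :
    ‖f s - f t‖ ^ 2 ≤ |(s : ℝ) - t| * ∑ i ∈ range n, ‖f (i + 1) - f i‖ ^ 2 := by
  wlog hst : s ≤ t generalizing s t
  · rw [norm_sub_rev, abs_sub_comm]
    exact this ht hs (le_of_not_ge hst)
  rw [norm_sub_rev, abs_sub_comm, abs_of_nonneg (by simpa using hst), ← Nat.cast_sub hst]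
  refine (norm_sub_sq_le_mul_sum_Ico f hst).trans (mul_le_mul_of_nonneg_left ?_ (by positivity))
  refine sum_le_sum_of_subset_of_nonneg (fun i hi => ?_) fun _ _ _ => by positivity
  simp only [mem_Ico, mem_range] at hi ⊢
  omega

theorem sum_range_cast_id (N : ℕ) : ∑ t ∈ range N, (t : ℝ) = N * (N - 1) / 2 := by
  induction N with
  | zero => simp
  | succ N ih => rw [sum_range_succ, ih]; push_cast; ring

theorem sum_range_sum_range_abs_sub (N : ℕ) :
    ∑ s ∈ range N, ∑ t ∈ range N, |(s : ℝ) - t| = ((N : ℝ) ^ 3 - N) / 3 := by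
  induction N with
  | zero => simp
  | succ N ih =>
    have hlast : ∑ t ∈ range N, |(N : ℝ) - t| = N * (N + 1) / 2 := by
      rw [sum_congr rfl fun t ht =>
          abs_of_nonneg (sub_nonneg.2 (by simpa using (mem_range.1 ht).le)),
        sum_sub_distrib, sum_const, card_range, nsmul_eq_mul, sum_range_cast_id]
      ring
    simp_rw [sum_range_succ, sum_add_distrib, ih, abs_sub_comm _ (N : ℝ), hlast, sub_self, abs_zero]
    push_cast
    ring

variable {E : Type*} [NormedAddCommGroup E] [InnerProductSpace ℝ E]

theorem sum_sum_norm_sub_sq {ι : Type*} (s : Finset ι) (f : ι → E) :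
    ∑ i ∈ s, ∑ j ∈ s, ‖f i - f j‖ ^ 2
      = 2 * #s * ∑ i ∈ s, ‖f i‖ ^ 2 - 2 * ‖∑ i ∈ s, f i‖ ^ 2 := by
  simp_rw [norm_sub_sq_real, sum_add_distrib, sum_sub_distrib, ← mul_sum, ← inner_sum,
    ← sum_inner, real_inner_self_eq_norm_sq, sum_const, nsmul_eq_mul, ← mul_sum]
  ring

theorem six_mul_sum_range_norm_sq_le_of_sum_eq_zero (f : ℕ → E) (n : ℕ)
    (hf : ∑ t ∈ range (n + 1), f t = 0) :
    6 * ∑ t ∈ range (n + 1), ‖f t‖ ^ 2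
      ≤ ((n : ℝ) + 1) ^ 2 * ∑ t ∈ range n, ‖f (t + 1) - f t‖ ^ 2 := by
  set D := ∑ t ∈ range n, ‖f (t + 1) - f t‖ ^ 2
  have hpairs := sum_sum_norm_sub_sq (range (n + 1)) f
  rw [hf, norm_zero, card_range] at hpairs
  have hbound : ∑ s ∈ range (n + 1), ∑ t ∈ range (n + 1), ‖f s - f t‖ ^ 2
      ≤ ∑ s ∈ range (n + 1), ∑ t ∈ range (n + 1), |(s : ℝ) - t| * D :=
    sum_le_sum fun s hs => sum_le_sum fun t ht =>
      norm_sub_sq_le_abs_sub_mul_sum_range f (mem_range_succ_iff.1 hs) (mem_range_succ_iff.1 ht)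
  simp_rw [← sum_mul, sum_range_sum_range_abs_sub, hpairs] at hbound
  have hD : 0 ≤ D := sum_nonneg fun _ _ => by positivity
  push_cast at hbound
  nlinarith

theorem Fin.six_mul_sum_norm_sq_le_of_sum_eq_zero {n : ℕ} (c : Fin (n + 1) → E)
    (hc : ∑ i, c i = 0) :
    6 * ∑ i, ‖c i‖ ^ 2 ≤ ((n : ℝ) + 1) ^ 2 * ∑ i : Fin n, ‖c i.succ - c i.castSucc‖ ^ 2 := by
  set f : ℕ → E := fun t => if h : t < n + 1 then c ⟨t, h⟩ else 0
  have hf : ∀ i : Fin (n + 1), f i = c i := fun i => dif_pos i.isLt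
  have hsucc : ∀ i : Fin n, f (i + 1) = c i.succ := fun i => hf i.succ
  have hcast : ∀ i : Fin n, f i = c i.castSucc := fun i => hf i.castSucc
  have h := six_mul_sum_range_norm_sq_le_of_sum_eq_zero f n
    (by rw [← Fin.sum_univ_eq_sum_range]; simpa only [hf] using hc)
  rw [← Fin.sum_univ_eq_sum_range (fun t => ‖f t‖ ^ 2),
    ← Fin.sum_univ_eq_sum_range (fun t => ‖f (t + 1) - f t‖ ^ 2)] at h
  simpa only [hf, hsucc, hcast] using h

end PathPoincare

theorem one_sub_cos_pi_div_le (x : ℝ) : 1 - Real.cos (Real.pi / x) ≤ 6 / x ^ 2 := by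
  have hcos := Real.one_sub_sq_div_two_le_cos (x := Real.pi / x)
  have hpi : Real.pi ^ 2 ≤ 12 := by nlinarith [Real.pi_lt_d2, Real.pi_pos]
  calc 1 - Real.cos (Real.pi / x) ≤ Real.pi ^ 2 / 2 / x ^ 2 := by
        rw [div_pow] at hcos; linarith [div_right_comm (Real.pi ^ 2) (x ^ 2) 2]
    _ ≤ 6 / x ^ 2 := by gcongr; linarith

section Orthonormal

variable {R ι n : Type*} [CommSemiring R] [StarRing R] [Fintype ι] [Fintype n] [DecidableEq ι]
  {γ : ι → n → R}

theorem star_dotProduct_sum_smul_of_orthonormal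
    (hγ : ∀ s t, star (γ s) ⬝ᵥ γ t = if s = t then 1 else 0) (c : ι → R) (s : ι) :
    star (γ s) ⬝ᵥ ∑ t, c t • γ t = c s := by
  simp [dotProduct_sum, dotProduct_smul, hγ]

theorem star_sum_smul_dotProduct_of_orthonormal
    (hγ : ∀ s t, star (γ s) ⬝ᵥ γ t = if s = t then 1 else 0) (c : ι → R) (t : ι) :
    star (∑ s, c s • γ s) ⬝ᵥ γ t = star (c t) := by
  rw [star_dotProduct, star_dotProduct_sum_smul_of_orthonormal hγ]

end Orthonormal

section History

variable {d K : ℕ} (U : Fin K → Matrix (Fin d) (Fin d) ℂ) (φ : Fin d → ℂ)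

theorem prodU_succ (r : Fin K) : prodU d K U (r + 1) = U r * prodU d K U r := by
  simp [prodU]

theorem prodU_mem_unitaryGroup (hU : ∀ i, U i ∈ unitaryGroup (Fin d) ℂ) (t : ℕ) :
    prodU d K U t ∈ unitaryGroup (Fin d) ℂ := by
  induction t with
  | zero => exact one_mem _
  | succ t ih =>
    rw [prodU]
    split
    · exact mul_mem (hU _) ih
    · exact mul_mem (one_mem _) ih

theorem star_mulVec_dotProduct_mulVec_of_mem_unitaryGroup {n : Type*} [Fintype n] [DecidableEq n]
    {A : Matrix n n ℂ} (hA : A ∈ unitaryGroup n ℂ) (x y : n → ℂ) :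
    star (A *ᵥ x) ⬝ᵥ (A *ᵥ y) = star x ⬝ᵥ y := by
  rw [star_mulVec, dotProduct_mulVec, vecMul_vecMul, ← star_eq_conjTranspose,
    mem_unitaryGroup_iff'.1 hA, vecMul_one]

theorem star_gammaVec_dotProduct_gammaVec (hU : ∀ i, U i ∈ unitaryGroup (Fin d) ℂ)
    (hφ : star φ ⬝ᵥ φ = 1) (s t : Fin (K + 1)) :
    star (gammaVec d K U φ s) ⬝ᵥ gammaVec d K U φ t = if s = t then 1 else 0 := by
  by_cases h : s = t
  · subst h
    have hψ := star_mulVec_dotProduct_mulVec_of_mem_unitaryGroup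
      (prodU_mem_unitaryGroup U hU s) φ φ
    simpa [dotProduct, gammaVec, Fintype.sum_prod_type] using hψ.trans hφ
  · simp [dotProduct, gammaVec, Fintype.sum_prod_type, h, Ne.symm h]

theorem kronecker_mulVec_tensor {R m n m' n' : Type*} [CommSemiring R] [Fintype m'] [Fintype n']
    (A : Matrix m m' R) (B : Matrix n n' R) (x : m' → R) (y : n' → R) :
    (A ⊗ₖ B) *ᵥ (fun p => x p.1 * y p.2) = fun p => (A *ᵥ x) p.1 * (B *ᵥ y) p.2 := by
  ext p
  simp only [mulVec, dotProduct, Fintype.sum_prod_type, kroneckerMap_apply, sum_mul_sum]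
  exact sum_congr rfl fun _ _ => sum_congr rfl fun _ _ => by ring

theorem gammaVec_eq_tensor (t : Fin (K + 1)) :
    gammaVec d K U φ t =
      fun p => (prodU d K U t *ᵥ φ) p.1 * (Pi.single t 1 : Fin (K + 1) → ℂ) p.2 := by
  ext p
  simp [gammaVec, Pi.single_apply]

theorem clockE_mulVec_single (a b t : Fin (K + 1)) :
    clockE K a b *ᵥ Pi.single t 1 = (Pi.single b 1 : Fin (K + 1) → ℂ) t • Pi.single a 1 := by
  ext j
  simp [clockE, mulVec_single, single_apply, Pi.single_apply, ite_and, eq_comm]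

theorem Hterm_mulVec_gammaVec (hU : ∀ i, U i ∈ unitaryGroup (Fin d) ℂ) (r : Fin K)
    (t : Fin (K + 1)) :
    Hterm d K U r *ᵥ gammaVec d K U φ t
      = (Pi.single r.castSucc 1 - Pi.single r.succ 1 : Fin (K + 1) → ℂ) t •
          (gammaVec d K U φ r.castSucc - gammaVec d K U φ r.succ) := by
  have hne : r.castSucc ≠ r.succ := Fin.castSucc_lt_succ.ne
  have hback : (U r)ᴴ * prodU d K U (r + 1) = prodU d K U r := by
    rw [prodU_succ, ← mul_assoc, ← star_eq_conjTranspose, mem_unitaryGroup_iff'.1 (hU r), one_mul]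
  simp only [Hterm, gammaVec_eq_tensor, sub_mulVec, kronecker_add, add_mulVec,
    kronecker_mulVec_tensor, clockE_mulVec_single, one_mulVec]
  ext ⟨i, j⟩
  by_cases h1 : t = r.castSucc
  · subst h1
    simp [prodU_succ, hne, Pi.single_apply]
  by_cases h2 : t = r.succ
  · subst h2
    simp [hback, hne, Pi.single_apply]
  · simp [Pi.single_apply, h1, h2]

theorem Hterm_mulVec_sum_smul_gammaVec (hU : ∀ i, U i ∈ unitaryGroup (Fin d) ℂ) (r : Fin K)
    (c : Fin (K + 1) → ℂ) :
    Hterm d K U r *ᵥ ∑ t, c t • gammaVec d K U φ t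
      = (c r.castSucc - c r.succ) • (gammaVec d K U φ r.castSucc - gammaVec d K U φ r.succ) := by
  simp only [mulVec_sum, mulVec_smul, Hterm_mulVec_gammaVec U φ hU, smul_smul, ← sum_smul]
  rw [← dotProduct, dotProduct_sub, dotProduct_single, dotProduct_single, mul_one, mul_one]

theorem star_sum_gammaVec_dotProduct_sum_smul_gammaVec (hU : ∀ i, U i ∈ unitaryGroup (Fin d) ℂ)
    (hφ : star φ ⬝ᵥ φ = 1) (c : Fin (K + 1) → ℂ) :
    star (∑ t, gammaVec d K U φ t) ⬝ᵥ ∑ t, c t • gammaVec d K U φ t = ∑ t, c t := by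
  simp only [star_sum, sum_dotProduct,
    star_dotProduct_sum_smul_of_orthonormal (star_gammaVec_dotProduct_gammaVec U φ hU hφ)]

theorem re_star_sum_smul_gammaVec_dotProduct_self (hU : ∀ i, U i ∈ unitaryGroup (Fin d) ℂ)
    (hφ : star φ ⬝ᵥ φ = 1) (c : Fin (K + 1) → ℂ) :
    (star (∑ t, c t • gammaVec d K U φ t) ⬝ᵥ ∑ t, c t • gammaVec d K U φ t).re
      = ∑ t, ‖c t‖ ^ 2 := by
  simp only [dotProduct_sum, dotProduct_smul,
    star_sum_smul_dotProduct_of_orthonormal (star_gammaVec_dotProduct_gammaVec U φ hU hφ),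
    smul_eq_mul]
  simp only [Complex.star_def, Complex.mul_conj', ← Complex.ofReal_pow, Complex.re_sum,
    Complex.ofReal_re]

theorem re_star_sum_smul_gammaVec_dotProduct_Hprop_mulVec (hU : ∀ i, U i ∈ unitaryGroup (Fin d) ℂ)
    (hφ : star φ ⬝ᵥ φ = 1) (c : Fin (K + 1) → ℂ) :
    (star (∑ t, c t • gammaVec d K U φ t) ⬝ᵥ (Hprop d K U *ᵥ ∑ t, c t • gammaVec d K U φ t)).re
      = ∑ r : Fin K, ‖c r.succ - c r.castSucc‖ ^ 2 := by
  simp only [Hprop, sum_mulVec, dotProduct_sum, Hterm_mulVec_sum_smul_gammaVec U φ hU,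
    dotProduct_smul, dotProduct_sub,
    star_sum_smul_dotProduct_of_orthonormal (star_gammaVec_dotProduct_gammaVec U φ hU hφ),
    ← star_sub, smul_eq_mul]
  simp only [Complex.star_def, Complex.mul_conj', ← Complex.ofReal_pow, Complex.re_sum,
    Complex.ofReal_re, norm_sub_rev]

end History

theorem Hprop_gap_general (d K : ℕ)
    (U : Fin K → Matrix (Fin d) (Fin d) ℂ)
    (hU : ∀ i, U i ∈ Matrix.unitaryGroup (Fin d) ℂ)
    (φ : Fin d → ℂ) (hφ : star φ ⬝ᵥ φ = 1)
    (v : Fin d × Fin (K + 1) → ℂ)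
    (hv : v ∈ Submodule.span ℂ (Set.range (gammaVec d K U φ)))
    (horth : star (∑ t : Fin (K + 1), gammaVec d K U φ t) ⬝ᵥ v = 0) :
    (1 - Real.cos (Real.pi / ((K : ℝ) + 1))) * (star v ⬝ᵥ v).re
        ≤ (star v ⬝ᵥ (Hprop d K U *ᵥ v)).re ∧
      (star v ⬝ᵥ v).re / (2 * ((K : ℝ) + 1) ^ 2) ≤ (star v ⬝ᵥ (Hprop d K U *ᵥ v)).re := by
  obtain ⟨c, rfl⟩ := (Submodule.mem_span_range_iff_exists_fun ℂ).1 hv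
  rw [star_sum_gammaVec_dotProduct_sum_smul_gammaVec U φ hU hφ] at horth
  rw [re_star_sum_smul_gammaVec_dotProduct_self U φ hU hφ,
    re_star_sum_smul_gammaVec_dotProduct_Hprop_mulVec U φ hU hφ]
  have hpoincare := Fin.six_mul_sum_norm_sq_le_of_sum_eq_zero c horth
  have hcos := one_sub_cos_pi_div_le ((K : ℝ) + 1)
  have hnorm : 0 ≤ ∑ t, ‖c t‖ ^ 2 := sum_nonneg fun _ _ => by positivity
  have hN : 0 < ((K : ℝ) + 1) ^ 2 := by positivity
  constructor
  · calc (1 - Real.cos (Real.pi / ((K : ℝ) + 1))) * ∑ t, ‖c t‖ ^ 2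
        ≤ 6 / ((K : ℝ) + 1) ^ 2 * ∑ t, ‖c t‖ ^ 2 := by gcongr
      _ ≤ _ := by rw [div_mul_eq_mul_div, div_le_iff₀ hN]; linarith
  · rw [div_le_iff₀ (by positivity)]
    nlinarith

/-- Spectral gap above the history state: if `‖φ‖ = 1` and `v` lies in the span of
`{γ₀, …, γ_K}` and is orthogonal to the history state `Σ_t γ_t`, then
`⟨v, H_prop v⟩ ≥ (1 − cos(π/(K+1)))·‖v‖² ≥ ‖v‖²/(2(K+1)²)`. -/
theorem Hprop_gap (d K : ℕ) (hd : 1 ≤ d) (hK : 1 ≤ K)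
    (U : Fin K → Matrix (Fin d) (Fin d) ℂ)
    (hU : ∀ i, U i ∈ Matrix.unitaryGroup (Fin d) ℂ)
    (φ : Fin d → ℂ) (hφ : star φ ⬝ᵥ φ = 1)
    (v : Fin d × Fin (K + 1) → ℂ)
    (hv : v ∈ Submodule.span ℂ (Set.range (gammaVec d K U φ)))
    (horth : star (∑ t : Fin (K + 1), gammaVec d K U φ t) ⬝ᵥ v = 0) :
    (1 - Real.cos (Real.pi / ((K : ℝ) + 1))) * (star v ⬝ᵥ v).re
        ≤ (star v ⬝ᵥ (Hprop d K U *ᵥ v)).re ∧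
      (star v ⬝ᵥ v).re / (2 * ((K : ℝ) + 1) ^ 2) ≤ (star v ⬝ᵥ (Hprop d K U *ᵥ v)).re :=
  Hprop_gap_general d K U hU φ hφ v hv horth
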